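/- Let A be a closed subalgebra of B(H) and C ⊆ A a C*-subalgebra such that A = closure(span(A C)) = closure(span(C A)) (a Δ-pair). Then A = closure(span(C A C)). -/
import Mathlib


open ContinuousLinearMap

noncomputable section

/-- Norm closure of the linear span of a set of operators. -/
def csp {E : Type*} [NormedAddCommGroup E] [NormedSpace ℂ E] (S : Set E) : Set E :=
  closure (Submodule.span ℂ S : Set E)

/-- If `(A, C)` is a Δ-pair, i.e. `A` is a closed subalgebra of `B(H)`, `C ⊆ A` is a
C*-subalgebra, and `A = closure span (A C) = closure span (C A)`, then
`A = closure span (C A C)`. -/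
theorem stmt5 {H : Type*}
    [NormedAddCommGroup H] [InnerProductSpace ℂ H] [CompleteSpace H]
    (A C : Submodule ℂ (H →L[ℂ] H))
    (hAclosed : IsClosed (A : Set (H →L[ℂ] H)))
    (hAmul : ∀ a ∈ A, ∀ b ∈ A, a ∘L b ∈ A)
    (hCclosed : IsClosed (C : Set (H →L[ℂ] H)))
    (hCmul : ∀ a ∈ C, ∀ b ∈ C, a ∘L b ∈ C)
    (hCstar : ∀ a ∈ C, adjoint a ∈ C)
    (hCA : C ≤ A)
    (hAC : (A : Set (H →L[ℂ] H)) = csp {T | ∃ a ∈ A, ∃ c ∈ C, T = a ∘L c})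
    (hCA' : (A : Set (H →L[ℂ] H)) = csp {T | ∃ c ∈ C, ∃ a ∈ A, T = c ∘L a}) :
    (A : Set (H →L[ℂ] H)) = csp {T | ∃ c ∈ C, ∃ a ∈ A, ∃ c' ∈ C, T = c ∘L a ∘L c'} := by
  set S3 : Set (H →L[ℂ] H) := {T | ∃ c ∈ C, ∃ a ∈ A, ∃ c' ∈ C, T = c ∘L a ∘L c'} with hS3
  set N : Submodule ℂ (H →L[ℂ] H) := (Submodule.span ℂ S3).topologicalClosure with hN
  have hNcoe : csp S3 = (N : Set (H →L[ℂ] H)) := by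
    rw [hN, Submodule.topologicalClosure_coe]; rfl
  -- key: c ∘L a ∈ N for c ∈ C, a ∈ A
  have key : ∀ c ∈ C, ∀ a ∈ A, c ∘L a ∈ N := by
    intro c hc a ha
    set SAC : Set (H →L[ℂ] H) := {T | ∃ a ∈ A, ∃ c ∈ C, T = a ∘L c} with hSAC
    have ha' : a ∈ closure (Submodule.span ℂ SAC : Set (H →L[ℂ] H)) := by
      have h : a ∈ (A : Set (H →L[ℂ] H)) := ha
      rw [hAC] at h; exact h
    set L : (H →L[ℂ] H) →L[ℂ] (H →L[ℂ] H) := ContinuousLinearMap.compL ℂ H H H c with hL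
    have hLa : L a = c ∘L a := rfl
    have h1 : L a ∈ closure (L '' (Submodule.span ℂ SAC : Set (H →L[ℂ] H))) :=
      image_closure_subset_closure_image L.continuous ⟨a, ha', rfl⟩
    have h2 : L '' (Submodule.span ℂ SAC : Set (H →L[ℂ] H))
        ⊆ (Submodule.span ℂ S3 : Set (H →L[ℂ] H)) := by
      have hmap : L '' (Submodule.span ℂ SAC : Set (H →L[ℂ] H))
          = (Submodule.map (L : (H →L[ℂ] H) →ₗ[ℂ] (H →L[ℂ] H)) (Submodule.span ℂ SAC)
              : Set (H →L[ℂ] H)) := rfl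
      rw [hmap, Submodule.map_span]
      apply Submodule.span_mono
      rintro _ ⟨T, ⟨a', ha', c', hc', rfl⟩, rfl⟩
      exact ⟨c, hc, a', ha', c', hc', rfl⟩
    have h3 : closure (L '' (Submodule.span ℂ SAC : Set (H →L[ℂ] H)))
        ⊆ closure (Submodule.span ℂ S3 : Set (H →L[ℂ] H)) := closure_mono h2
    rw [← hLa]
    exact h3 h1
  apply Set.Subset.antisymm
  · -- A ⊆ csp S3
    rw [hCA', hNcoe]
    have hsub : {T : H →L[ℂ] H | ∃ c ∈ C, ∃ a ∈ A, T = c ∘L a} ⊆ (N : Set (H →L[ℂ] H)) := by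
      rintro _ ⟨c, hc, a, ha, rfl⟩
      exact key c hc a ha
    have hspan : (Submodule.span ℂ {T : H →L[ℂ] H | ∃ c ∈ C, ∃ a ∈ A, T = c ∘L a} : Set _)
        ⊆ (N : Set (H →L[ℂ] H)) := Submodule.span_le.mpr hsub
    exact closure_minimal hspan (Submodule.span ℂ S3).isClosed_topologicalClosure
  · -- csp S3 ⊆ A
    have hsub : S3 ⊆ (A : Set (H →L[ℂ] H)) := by
      rintro _ ⟨c, hc, a, ha, c', hc', rfl⟩
      exact hAmul c (hCA hc) _ (hAmul a ha c' (hCA hc'))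
    have hspan : (Submodule.span ℂ S3 : Set _) ⊆ (A : Set (H →L[ℂ] H)) :=
      Submodule.span_le.mpr hsub
    exact closure_minimal hspan hAclosed
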